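/- For every α ∈ P_6^1, β ∈ P_6^2 and γ ∈ P_6^3, one has α + β + γ ≠ 0 in AG(6,3). -/
import Mathlib


/-- A cap set in `AG(n,3)`: no three distinct points sum to zero. -/
def IsCap {n : ℕ} (C : Set (Fin n → ZMod 3)) : Prop :=
  ∀ a ∈ C, ∀ b ∈ C, ∀ c ∈ C, a ≠ b → a ≠ c → b ≠ c → a + b + c ≠ 0

/-- A complete cap set: a cap set that cannot be extended by any new point. -/
def IsCompleteCap {n : ℕ} (C : Set (Fin n → ZMod 3)) : Prop :=
  IsCap C ∧ ∀ x ∉ C, ¬ IsCap (insert x C)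

/-- `x(0)`: the set of coordinates where `x` vanishes. -/
def zeroSet {n : ℕ} (x : Fin n → ZMod 3) : Set (Fin n) := {i | x i = 0}

/-- `X(x)`: the set of points with the same zero set as `x`. -/
def Xset {n : ℕ} (x : Fin n → ZMod 3) : Set (Fin n → ZMod 3) :=
  {a | zeroSet a = zeroSet x}

/-- `B_n`: all points with no zero coordinates. -/
def Bset (n : ℕ) : Set (Fin n → ZMod 3) := {a | ∀ i, a i ≠ 0}

/-- A `P_n`-set. -/
def IsPSet {n : ℕ} (A : Set (Fin n → ZMod 3)) : Prop :=
  (∀ a ∈ A, ∀ b ∈ A, a ≠ b → ∃ i, a i = 0 ∧ b i = 0) ∧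
  (∀ a ∈ A, ∀ b ∈ A, ∀ c ∈ A, a ≠ b → a ≠ c → b ≠ c → a + b + c ≠ 0)

/-- A complete `P_n`-set: it cannot be extended by a new point to a `P_n`-set. -/
def IsCompletePSet {n : ℕ} (A : Set (Fin n → ZMod 3)) : Prop :=
  IsPSet A ∧ ∀ x ∉ A, ¬ IsPSet (insert x A)

/-- A `b`-saturated set: `X(α) ⊆ A` for every `α ∈ A`. -/
def IsBSaturated {n : ℕ} (A : Set (Fin n → ZMod 3)) : Prop :=
  ∀ a ∈ A, Xset a ⊆ A

/-- Concatenation (product) of sets of points. -/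
def concat {n m : ℕ} (A : Set (Fin n → ZMod 3)) (B : Set (Fin m → ZMod 3)) :
    Set (Fin (n + m) → ZMod 3) :=
  {x | ∃ a ∈ A, ∃ b ∈ B, x = Fin.append a b}

/-- The ten 3-element index sets (0-indexed versions of the 1-indexed triples
`{1,2,3},{1,2,6},{1,3,5},{2,3,4},{3,4,6},{3,5,6},{2,4,5},{2,5,6},{1,4,6},{1,4,5}`). -/
def S6 : Set (Set (Fin 6)) :=
  {{0, 1, 2}, {0, 1, 5}, {0, 2, 4}, {1, 2, 3}, {2, 3, 5},
   {2, 4, 5}, {1, 3, 4}, {1, 4, 5}, {0, 3, 5}, {0, 3, 4}}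

/-- `P₆¹`: points of `AG(6,3)` vanishing exactly on one of the triples in `S6`. -/
def P61 : Set (Fin 6 → ZMod 3) := {a | zeroSet a ∈ S6}

/-- `P₆²`: the mirror inversion of `P₆¹` (image under coordinate reversal). -/
def P62 : Set (Fin 6 → ZMod 3) := (fun a => a ∘ Fin.rev) '' P61

/-- `e_{i,b}`: the vector with `i`-th coordinate `b` and all other coordinates `0`. -/
def evec (i : Fin 6) (b : ZMod 3) : Fin 6 → ZMod 3 := fun j => if j = i then b else 0

/-- `P₆³ = {e_{i,1}, e_{i,2} : i}`. -/
def P63 : Set (Fin 6 → ZMod 3) := {x | ∃ i : Fin 6, x = evec i 1 ∨ x = evec i 2}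


def LS6 : List (Finset (Fin 6)) :=
  [{0, 1, 2}, {0, 1, 5}, {0, 2, 4}, {1, 2, 3}, {2, 3, 5},
   {2, 4, 5}, {1, 3, 4}, {1, 4, 5}, {0, 3, 5}, {0, 3, 4}]

set_option maxRecDepth 4000 in
lemma key6 : ∀ s ∈ LS6, ∀ t ∈ LS6, ∀ i : Fin 6,
    (∀ j, j ≠ i → (j ∈ s ↔ Fin.rev j ∈ t)) → (i ∈ s ∧ Fin.rev i ∈ t) := by decide

lemma zmod3_add_eq_zero : ∀ x y : ZMod 3, x + y = 0 → (x = 0 ↔ y = 0) := by decide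

lemma mem_P61_iff {a : Fin 6 → ZMod 3} (ha : a ∈ P61) :
    ∃ s ∈ LS6, ∀ j, a j = 0 ↔ j ∈ s := by
  have conv : ∀ (s : Set (Fin 6)) (f : Finset (Fin 6)), zeroSet a = s →
      (∀ j, j ∈ s ↔ j ∈ f) → ∀ j, a j = 0 ↔ j ∈ f := by
    intro s f h hf j
    have : a j = 0 ↔ j ∈ s := by rw [← h]; rfl
    exact this.trans (hf j)
  simp only [P61, S6, Set.mem_setOf_eq, Set.mem_insert_iff, Set.mem_singleton_iff] at ha
  rcases ha with h|h|h|h|h|h|h|h|h|h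
  · exact ⟨{0,1,2}, by decide, conv _ _ h (fun j => by simp)⟩
  · exact ⟨{0,1,5}, by decide, conv _ _ h (fun j => by simp)⟩
  · exact ⟨{0,2,4}, by decide, conv _ _ h (fun j => by simp)⟩
  · exact ⟨{1,2,3}, by decide, conv _ _ h (fun j => by simp)⟩
  · exact ⟨{2,3,5}, by decide, conv _ _ h (fun j => by simp)⟩
  · exact ⟨{2,4,5}, by decide, conv _ _ h (fun j => by simp)⟩
  · exact ⟨{1,3,4}, by decide, conv _ _ h (fun j => by simp)⟩
  · exact ⟨{1,4,5}, by decide, conv _ _ h (fun j => by simp)⟩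
  · exact ⟨{0,3,5}, by decide, conv _ _ h (fun j => by simp)⟩
  · exact ⟨{0,3,4}, by decide, conv _ _ h (fun j => by simp)⟩

/-- For every `α ∈ P₆¹`, `β ∈ P₆²`, `γ ∈ P₆³`, we have `α + β + γ ≠ 0`. -/
theorem P61_P62_P63_sum_ne_zero :
    ∀ a ∈ P61, ∀ b ∈ P62, ∀ c ∈ P63, a + b + c ≠ 0 := by
  intro a ha b hb c hc h
  obtain ⟨b', hb', rfl⟩ := hb
  obtain ⟨s, hsL, hs⟩ := mem_P61_iff ha
  obtain ⟨t, htL, ht⟩ := mem_P61_iff hb'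
  obtain ⟨i, hc | hc⟩ := hc <;> subst hc <;>
  · have hpt : ∀ j, a j + b' (Fin.rev j) + (if j = i then (_ : ZMod 3) else 0) = 0 :=
      fun j => congrFun h j
    have hoff : ∀ j, j ≠ i → (j ∈ s ↔ Fin.rev j ∈ t) := by
      intro j hj
      have := hpt j
      rw [if_neg hj, add_zero] at this
      exact ((hs j).symm.trans (zmod3_add_eq_zero _ _ this)).trans (ht (Fin.rev j))
    have hi := key6 s hsL t htL i hoff
    have ha0 : a i = 0 := (hs i).mpr hi.1
    have hb0 : b' (Fin.rev i) = 0 := (ht (Fin.rev i)).mpr hi.2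
    have := hpt i
    rw [if_pos rfl, ha0, hb0] at this
    revert this; decide
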